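/- arXiv:2506.05113 — 5 statements merged into one kernel-verified Lean document; each statement's English description precedes it below -/
import Mathlib

section
/- Let C₁ : ℝ → ℝ be a continuous even function satisfying |C₁(t)| ≤ c/(1+|t|) for some c > 0. Define γ²(ρ) = ρ^{−2} ∫_{−ρ}^ρ ∫_{−ρ}^ρ sgn(t₁) sgn(t₂) C₁(t₁ − t₂) dt₁ dt₂. Then γ²(ρ) = O(ln ρ / ρ) as ρ → ∞; in particular γ²(ρ) → 0. -/
/-!
Since `|sgn| ≤ 1`, the double integral is bounded by `∫∫ c / (1 + |t₁ - t₂|)` over `[-ρ, ρ]²`.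
For fixed `t₁` the inner integral is at most `∫_{-2ρ}^{2ρ} c / (1 + |s|) = 2c log(1 + 2ρ)`,
so the double integral is `O(ρ log ρ)` and the prefactor `ρ⁻²` leaves `O(log ρ / ρ)`.
-/

open MeasureTheory Filter Real intervalIntegral

lemma Real.abs_sign_le_one (x : ℝ) : |Real.sign x| ≤ 1 := by
  rcases Real.sign_apply_eq x with h | h | h <;> simp [h]

lemma abs_sign_mul_sign_mul_le (a b x : ℝ) : |Real.sign a * Real.sign b * x| ≤ |x| := by
  rw [abs_mul, abs_mul]
  have hab : |Real.sign a| * |Real.sign b| ≤ 1 :=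
    mul_le_one₀ (Real.abs_sign_le_one a) (abs_nonneg _) (Real.abs_sign_le_one b)
  nlinarith [abs_nonneg x]

lemma continuous_inv_one_add_abs : Continuous fun s : ℝ => (1 + |s|)⁻¹ :=
  (continuous_const.add continuous_abs).inv₀ fun s => (by positivity : (0 : ℝ) < 1 + |s|).ne'

lemma integral_inv_one_add_abs {R : ℝ} (hR : 0 ≤ R) :
    ∫ s in (-R)..R, (1 + |s|)⁻¹ = 2 * log (1 + R) := by
  have hint := continuous_inv_one_add_abs.intervalIntegrable (μ := volume)
  have half : ∫ s in (0 : ℝ)..R, (1 + |s|)⁻¹ = log (1 + R) :=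
    calc ∫ s in (0 : ℝ)..R, (1 + |s|)⁻¹ = ∫ s in (0 : ℝ)..R, (1 + s)⁻¹ :=
          integral_congr fun s hs => by
            rw [Set.uIcc_of_le hR] at hs
            simp only [abs_of_nonneg hs.1]
      _ = ∫ u in (1 : ℝ)..1 + R, u⁻¹ := by simp
      _ = log (1 + R) := by rw [integral_inv_of_pos one_pos (by linarith), div_one]
  have symm : ∫ s in (-R)..0, (1 + |s|)⁻¹ = ∫ s in (0 : ℝ)..R, (1 + |s|)⁻¹ := by
    simpa using (integral_comp_neg (a := 0) (b := R) fun s : ℝ => (1 + |s|)⁻¹).symm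
  rw [← integral_add_adjacent_intervals (hint (-R) 0) (hint 0 R), symm, half]
  ring

lemma integral_inv_one_add_abs_sub_le {ρ t : ℝ} (ht : |t| ≤ ρ) :
    ∫ s in (-ρ)..ρ, (1 + |t - s|)⁻¹ ≤ 2 * log (1 + 2 * ρ) := by
  obtain ⟨htl, htr⟩ := abs_le.mp ht
  calc ∫ s in (-ρ)..ρ, (1 + |t - s|)⁻¹ = ∫ s in (t - ρ)..(t + ρ), (1 + |s|)⁻¹ := by
        rw [integral_comp_sub_left (fun s : ℝ => (1 + |s|)⁻¹), sub_neg_eq_add]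
    _ ≤ ∫ s in (-(2 * ρ))..(2 * ρ), (1 + |s|)⁻¹ :=
        integral_mono_interval (by linarith) (by linarith) (by linarith)
          (Eventually.of_forall fun s => by positivity)
          (continuous_inv_one_add_abs.intervalIntegrable _ _)
    _ = 2 * log (1 + 2 * ρ) := integral_inv_one_add_abs (by linarith)

lemma abs_integral_integral_le_of_abs_le {f : ℝ → ℝ → ℝ} {c ρ : ℝ} (hρ : 0 ≤ ρ)
    (hf : ∀ t₁ t₂, |f t₁ t₂| ≤ c / (1 + |t₁ - t₂|)) :
    |∫ t₁ in (-ρ)..ρ, ∫ t₂ in (-ρ)..ρ, f t₁ t₂| ≤ 4 * c * ρ * log (1 + 2 * ρ) := by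
  have hc : 0 ≤ c := by simpa using (abs_nonneg _).trans (hf 0 0)
  have inner : ∀ t₁ ∈ Set.uIoc (-ρ) ρ, ‖∫ t₂ in (-ρ)..ρ, f t₁ t₂‖ ≤ c * (2 * log (1 + 2 * ρ)) := by
    intro t₁ ht₁
    rw [Set.uIoc_of_le (by linarith)] at ht₁
    calc ‖∫ t₂ in (-ρ)..ρ, f t₁ t₂‖ ≤ ∫ t₂ in (-ρ)..ρ, c * (1 + |t₁ - t₂|)⁻¹ :=
          norm_integral_le_of_norm_le (by linarith)
            (Eventually.of_forall fun t₂ _ => by simpa [div_eq_mul_inv] using hf t₁ t₂)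
            ((continuous_inv_one_add_abs.comp (continuous_const.sub continuous_id)).const_mul
              c |>.intervalIntegrable _ _)
      _ = c * ∫ t₂ in (-ρ)..ρ, (1 + |t₁ - t₂|)⁻¹ := integral_const_mul _ _
      _ ≤ c * (2 * log (1 + 2 * ρ)) :=
          mul_le_mul_of_nonneg_left
            (integral_inv_one_add_abs_sub_le (abs_le.mpr ⟨ht₁.1.le, ht₁.2⟩)) hc
  have outer := norm_integral_le_of_norm_le_const inner
  rw [Real.norm_eq_abs, sub_neg_eq_add, abs_of_nonneg (by linarith : 0 ≤ ρ + ρ)] at outer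
  linarith

lemma log_one_add_two_mul_le_two_mul_log {ρ : ℝ} (hρ : 3 ≤ ρ) :
    log (1 + 2 * ρ) ≤ 2 * log ρ := by
  have h := log_le_log (by linarith) (show 1 + 2 * ρ ≤ ρ ^ 2 by nlinarith)
  rwa [log_pow, Nat.cast_ofNat] at h

theorem gamma_sq_decay_general (C₁ : ℝ → ℝ) (c : ℝ) (hc : 0 < c)
    (hdecay : ∀ t, |C₁ t| ≤ c / (1 + |t|))
    (γsq : ℝ → ℝ)
    (hγ : ∀ ρ, γsq ρ =
      ρ^(-2 : ℤ) * ∫ t₁ in (-ρ)..ρ, ∫ t₂ in (-ρ)..ρ,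
        Real.sign t₁ * Real.sign t₂ * C₁ (t₁ - t₂)) :
    (∃ c' > 0, ∀ᶠ ρ in atTop, |γsq ρ| ≤ c' * Real.log ρ / ρ) ∧
      Tendsto γsq atTop (nhds 0) := by
  have hbound : ∀ ρ ≥ 3, |γsq ρ| ≤ 8 * c * log ρ / ρ := by
    intro ρ hρ
    have hρ0 : 0 < ρ := by linarith
    have hdouble := abs_integral_integral_le_of_abs_le hρ0.le fun t₁ t₂ =>
      (abs_sign_mul_sign_mul_le t₁ t₂ _).trans (hdecay (t₁ - t₂))
    have hlog := log_one_add_two_mul_le_two_mul_log hρ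
    rw [hγ, abs_mul, zpow_neg, abs_inv, abs_of_pos (by positivity), zpow_two]
    calc (ρ * ρ)⁻¹ * |∫ t₁ in (-ρ)..ρ, ∫ t₂ in (-ρ)..ρ, sign t₁ * sign t₂ * C₁ (t₁ - t₂)|
        ≤ (ρ * ρ)⁻¹ * (4 * c * ρ * (2 * log ρ)) := by gcongr; exact hdouble.trans (by gcongr)
      _ = 8 * c * log ρ / ρ := by field_simp; ring
  have hev : ∀ᶠ ρ in atTop, |γsq ρ| ≤ 8 * c * log ρ / ρ := eventually_atTop.mpr ⟨3, hbound⟩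
  refine ⟨⟨8 * c, by positivity, hev⟩, squeeze_zero_norm' hev ?_⟩
  simpa [mul_div_assoc] using isLittleO_log_id_atTop.tendsto_div_nhds_zero.const_mul (8 * c)

/-- If `C₁` is continuous, even, and `|C₁(t)| ≤ c/(1+|t|)`, then
`γ²(ρ) = ρ⁻² ∫_{−ρ}^ρ ∫_{−ρ}^ρ sgn(t₁) sgn(t₂) C₁(t₁−t₂) dt₁ dt₂` is
`O(ln ρ / ρ)` as `ρ → ∞`; in particular it tends to `0`. -/
theorem gamma_sq_decay (C₁ : ℝ → ℝ) (hcont : Continuous C₁)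
    (heven : ∀ t, C₁ (-t) = C₁ t) (c : ℝ) (hc : 0 < c)
    (hdecay : ∀ t, |C₁ t| ≤ c / (1 + |t|))
    (γsq : ℝ → ℝ)
    (hγ : ∀ ρ, γsq ρ =
      ρ^(-2 : ℤ) * ∫ t₁ in (-ρ)..ρ, ∫ t₂ in (-ρ)..ρ,
        Real.sign t₁ * Real.sign t₂ * C₁ (t₁ - t₂)) :
    (∃ c' > 0, ∀ᶠ ρ in atTop, |γsq ρ| ≤ c' * Real.log ρ / ρ) ∧
      Tendsto γsq atTop (nhds 0) :=
  gamma_sq_decay_general C₁ c hc hdecay γsq hγ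
end

section
/- Let C₁ be a continuous even function with |C₁(t)| ≤ c/(1+|t|), and let f_T be the DTB function with f_T(t) → ±1/2 as t → ±∞. Define H_ρ = 2∫₀^1 f_T(ρs) ds and γ²(ρ) = 2∫₀^1∫₀^1 [C₁(ρ(s₁−s₂)) − C₁(ρ(s₁+s₂))] ds₁ ds₂. Then H_ρ/γ(ρ) → ∞ as ρ → ∞ (where γ(ρ) = √(γ²(ρ)), assuming γ²(ρ) > 0 for all large ρ). -/
/-!
`H_ρ → 1` and `γ²(ρ) → 0` as `ρ → ∞`, both by dominated convergence: `f_T(ρs) → 1/2` for every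
`s > 0`, while `C₁(ρ(s₁ ∓ s₂)) → 0` off the diagonal `s₁ = s₂` by the decay of `C₁`, and all
integrands are uniformly bounded. Hence `H_ρ / γ(ρ)` is a quantity tending to `1` divided by a
positive quantity tending to `0`.
-/

open MeasureTheory Filter Real Set Topology
open scoped Interval

lemma Continuous.isBounded_image_Ici_of_tendsto {E : Type*} [PseudoMetricSpace E] {f : ℝ → E}
    (hf : Continuous f) {L : E} (h : Tendsto f atTop (𝓝 L)) (a : ℝ) :
    Bornology.IsBounded (f '' Ici a) := by
  obtain ⟨s, hs, hbdd⟩ := Metric.exists_isBounded_image_of_tendsto h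
  obtain ⟨A, hA⟩ := mem_atTop_sets.mp hs
  have hcover : Ici a ⊆ Icc a A ∪ s := fun t ht => by
    rcases le_total t A with htA | hAt
    · exact Or.inl ⟨ht, htA⟩
    · exact Or.inr (hA t hAt)
  refine Bornology.IsBounded.subset ?_ (image_mono hcover)
  rw [image_union]
  exact ((isCompact_Icc.image hf).isBounded).union hbdd

lemma intervalIntegral.tendsto_integral_of_continuous_of_abs_le {ι : Type*} {l : Filter ι}
    [l.IsCountablyGenerated] {F : ι → ℝ → ℝ} {f : ℝ → ℝ} {a b B : ℝ}
    (hF : ∀ i, Continuous (F i)) (hbound : ∀ᶠ i in l, ∀ s ∈ Ι a b, |F i s| ≤ B)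
    (hlim : ∀ᵐ s, s ∈ Ι a b → Tendsto (F · s) l (𝓝 (f s))) :
    Tendsto (fun i => ∫ s in a..b, F i s) l (𝓝 (∫ s in a..b, f s)) :=
  tendsto_integral_filter_of_dominated_convergence (fun _ => B)
    (Eventually.of_forall fun i => (hF i).aestronglyMeasurable)
    (hbound.mono fun _ h => Eventually.of_forall h) intervalIntegrable_const hlim

lemma tendsto_intervalIntegral_comp_mul_atTop {f : ℝ → ℝ} (hf : Continuous f) {L : ℝ}
    (h : Tendsto f atTop (𝓝 L)) :
    Tendsto (fun ρ => ∫ s in (0:ℝ)..1, f (ρ * s)) atTop (𝓝 L) := by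
  obtain ⟨B, hB⟩ := isBounded_iff_forall_norm_le.mp (hf.isBounded_image_Ici_of_tendsto h 0)
  have hconv := intervalIntegral.tendsto_integral_of_continuous_of_abs_le (f := fun _ => L)
    (l := atTop) (F := fun ρ s => f (ρ * s)) (B := B) (fun ρ => by fun_prop)
    (by
      filter_upwards [eventually_ge_atTop 0] with ρ hρ s hs
      rw [uIoc_of_le zero_le_one] at hs
      exact hB _ (mem_image_of_mem f (mul_nonneg hρ hs.1.le)))
    (Eventually.of_forall fun s hs => by
      rw [uIoc_of_le zero_le_one] at hs
      exact h.comp (tendsto_id.atTop_mul_const hs.1))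
  simpa using hconv

section Decay

variable {g : ℝ → ℝ} {c : ℝ}

lemma nonneg_of_abs_le_div_one_add_abs (hdecay : ∀ t, |g t| ≤ c / (1 + |t|)) : 0 ≤ c := by
  simpa using (abs_nonneg _).trans (hdecay 0)

lemma abs_le_of_abs_le_div_one_add_abs (hdecay : ∀ t, |g t| ≤ c / (1 + |t|)) (t : ℝ) :
    |g t| ≤ c :=
  (hdecay t).trans <| div_le_self (nonneg_of_abs_le_div_one_add_abs hdecay)
    (le_add_of_nonneg_right (abs_nonneg t))

lemma tendsto_comp_mul_atTop_of_abs_le_div_one_add_abs (hdecay : ∀ t, |g t| ≤ c / (1 + |t|))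
    {x : ℝ} (hx : x ≠ 0) : Tendsto (fun ρ => g (ρ * x)) atTop (𝓝 0) := by
  have hbound : Tendsto (fun ρ : ℝ => c / (1 + |ρ| * |x|)) atTop (𝓝 0) :=
    tendsto_const_nhds.div_atTop <| tendsto_atTop_add_const_left _ _ <|
      tendsto_abs_atTop_atTop.atTop_mul_const (abs_pos.mpr hx)
  exact squeeze_zero_norm (fun ρ => by simpa [abs_mul] using hdecay (ρ * x)) hbound

lemma abs_sub_le_two_mul_of_abs_le_div_one_add_abs (hdecay : ∀ t, |g t| ≤ c / (1 + |t|)) (t u : ℝ) :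
    |g t - g u| ≤ 2 * c := by
  linarith [abs_sub (g t) (g u), abs_le_of_abs_le_div_one_add_abs hdecay t,
    abs_le_of_abs_le_div_one_add_abs hdecay u]

lemma tendsto_intervalIntegral_comp_mul_sub_sub_comp_mul_add (hg : Continuous g)
    (hdecay : ∀ t, |g t| ≤ c / (1 + |t|)) {s₁ : ℝ} (hs₁ : 0 < s₁) :
    Tendsto (fun ρ => ∫ s₂ in (0:ℝ)..1, g (ρ * (s₁ - s₂)) - g (ρ * (s₁ + s₂)))
      atTop (𝓝 0) := by
  have hoff_diag : ∀ᵐ s₂ : ℝ, s₂ ≠ s₁ := by simp [ae_iff, measure_singleton]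
  have hconv := intervalIntegral.tendsto_integral_of_continuous_of_abs_le (f := fun _ => 0)
    (l := atTop) (F := fun ρ s₂ => g (ρ * (s₁ - s₂)) - g (ρ * (s₁ + s₂))) (B := 2 * c)
    (fun ρ => by fun_prop)
    (Eventually.of_forall fun ρ s₂ _ => abs_sub_le_two_mul_of_abs_le_div_one_add_abs hdecay _ _)
    (by
      filter_upwards [hoff_diag] with s₂ hne hs₂
      rw [uIoc_of_le zero_le_one] at hs₂
      simpa using
        (tendsto_comp_mul_atTop_of_abs_le_div_one_add_abs hdecay (sub_ne_zero.mpr hne.symm)).sub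
        (tendsto_comp_mul_atTop_of_abs_le_div_one_add_abs hdecay (add_pos hs₁ hs₂.1).ne'))
  simpa using hconv

lemma tendsto_doubleIntegral_comp_mul_sub_sub_comp_mul_add (hg : Continuous g)
    (hdecay : ∀ t, |g t| ≤ c / (1 + |t|)) :
    Tendsto (fun ρ => ∫ s₁ in (0:ℝ)..1, ∫ s₂ in (0:ℝ)..1,
      g (ρ * (s₁ - s₂)) - g (ρ * (s₁ + s₂))) atTop (𝓝 0) := by
  have hconv := intervalIntegral.tendsto_integral_of_continuous_of_abs_le (f := fun _ => 0)
    (l := atTop) (B := 2 * c)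
    (F := fun ρ s₁ => ∫ s₂ in (0:ℝ)..1, g (ρ * (s₁ - s₂)) - g (ρ * (s₁ + s₂)))
    (fun ρ => intervalIntegral.continuous_parametric_intervalIntegral_of_continuous'
      (by fun_prop) 0 1)
    (Eventually.of_forall fun ρ s₁ _ => by
      simpa using intervalIntegral.norm_integral_le_of_norm_le_const (a := 0) (b := 1)
        (f := fun s₂ => g (ρ * (s₁ - s₂)) - g (ρ * (s₁ + s₂)))
        fun s₂ _ => abs_sub_le_two_mul_of_abs_le_div_one_add_abs hdecay (ρ * (s₁ - s₂)) (ρ * (s₁ + s₂)))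
    (Eventually.of_forall fun s₁ hs₁ => by
      rw [uIoc_of_le zero_le_one] at hs₁
      exact tendsto_intervalIntegral_comp_mul_sub_sub_comp_mul_add hg hdecay hs₁.1)
  simpa using hconv

end Decay

lemma Filter.Tendsto.div_sqrt_atTop {α : Type*} {l : Filter α} {u v : α → ℝ} {L : ℝ}
    (hL : 0 < L) (hu : Tendsto u l (𝓝 L)) (hv : Tendsto v l (𝓝 0))
    (hv_pos : ∀ᶠ x in l, 0 < v x) : Tendsto (fun x => u x / √(v x)) l atTop := by
  have hsqrt : Tendsto (fun x => √(v x)) l (𝓝[>] 0) :=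
    tendsto_nhdsWithin_iff.mpr
      ⟨by simpa using hv.sqrt, hv_pos.mono fun _ h => Real.sqrt_pos.mpr h⟩
  simpa [div_eq_mul_inv] using hu.pos_mul_atTop hL hsqrt.inv_tendsto_nhdsGT_zero

theorem snr_tendsto_atTop_general (C₁ : ℝ → ℝ) (hcont : Continuous C₁) (c : ℝ)
    (hdecay : ∀ t, |C₁ t| ≤ c / (1 + |t|))
    (fT : ℝ → ℝ) (hfTcont : Continuous fT)
    (hfTtop : Tendsto fT atTop (nhds (1/2)))
    (H γsq : ℝ → ℝ)
    (hH : ∀ ρ, H ρ = 2 * ∫ s in (0:ℝ)..1, fT (ρ * s))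
    (hγ : ∀ ρ, γsq ρ = 2 * ∫ s₁ in (0:ℝ)..1, ∫ s₂ in (0:ℝ)..1,
        C₁ (ρ * (s₁ - s₂)) - C₁ (ρ * (s₁ + s₂)))
    (hpos : ∀ᶠ ρ in atTop, 0 < γsq ρ) :
    Tendsto (fun ρ => H ρ / Real.sqrt (γsq ρ)) atTop atTop := by
  have hHlim : Tendsto H atTop (𝓝 1) := by
    have h := (tendsto_intervalIntegral_comp_mul_atTop hfTcont hfTtop).const_mul 2
    rw [show (2 : ℝ) * (1 / 2) = 1 by norm_num] at h
    exact h.congr fun ρ => (hH ρ).symm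
  have hγlim : Tendsto γsq atTop (𝓝 0) := by
    have h := (tendsto_doubleIntegral_comp_mul_sub_sub_comp_mul_add hcont hdecay).const_mul 2
    rw [mul_zero] at h
    exact h.congr fun ρ => (hγ ρ).symm
  exact hHlim.div_sqrt_atTop one_pos hγlim hpos

/-- Signal-to-noise divergence in 1D: with `H_ρ = 2∫₀^1 f_T(ρs) ds` and
`γ²(ρ) = 2∫₀^1∫₀^1 [C₁(ρ(s₁−s₂)) − C₁(ρ(s₁+s₂))] ds₁ ds₂`, one has
`H_ρ/γ(ρ) → ∞` as `ρ → ∞`, assuming `γ²(ρ) > 0` for all large `ρ`. -/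
theorem snr_tendsto_atTop (C₁ : ℝ → ℝ) (hcont : Continuous C₁)
    (hCeven : ∀ t, C₁ (-t) = C₁ t) (c : ℝ) (hc : 0 < c)
    (hdecay : ∀ t, |C₁ t| ≤ c / (1 + |t|))
    (fT : ℝ → ℝ) (hfTcont : Continuous fT)
    (hfTtop : Tendsto fT atTop (nhds (1/2)))
    (hfTbot : Tendsto fT atBot (nhds (-(1/2))))
    (H γsq : ℝ → ℝ)
    (hH : ∀ ρ, H ρ = 2 * ∫ s in (0:ℝ)..1, fT (ρ * s))
    (hγ : ∀ ρ, γsq ρ = 2 * ∫ s₁ in (0:ℝ)..1, ∫ s₂ in (0:ℝ)..1,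
        C₁ (ρ * (s₁ - s₂)) - C₁ (ρ * (s₁ + s₂)))
    (hpos : ∀ᶠ ρ in atTop, 0 < γsq ρ) :
    Tendsto (fun ρ => H ρ / Real.sqrt (γsq ρ)) atTop atTop :=
  snr_tendsto_atTop_general C₁ hcont c hdecay fT hfTcont hfTtop H γsq hH hγ hpos
end

section
/- Let f_T be the DTB function, f_T(t) = ∫_{-∞}^t φ(s) ds − 1/2 with ∫φ = 1 and φ compactly supported. Define h(ρ) = 4 ∫₀^ρ t √(ρ² − t²) f_T(t) dt. Then h(ρ)/ρ³ → 2/3 as ρ → ∞. -/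
/-!
Substituting `t = ρ s` gives `h ρ / ρ³ = 4 ∫₀¹ s √(1 - s²) f_T(ρ s) ds`. The function `f_T` is
bounded by `∫ |φ| + 1/2` and tends to `∫ φ - 1/2 = 1/2` at `+∞`, so by dominated convergence the
right-hand side tends to `4 · (1/2) · ∫₀¹ s √(1 - s²) ds = 2/3`.
-/

open MeasureTheory Filter Set Topology

section IntegralIic

variable {E : Type*} [NormedAddCommGroup E] [NormedSpace ℝ E] {f : ℝ → E}

theorem MeasureTheory.Integrable.continuous_integral_Iic (hf : Integrable f) :
    Continuous fun t => ∫ x in Iic t, f x := by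
  have h : ∀ t, ∫ x in Iic t, f x = (∫ x in Iic 0, f x) + ∫ x in (0:ℝ)..t, f x := fun t => by
    rw [← intervalIntegral.integral_Iic_sub_Iic hf.integrableOn hf.integrableOn, add_sub_cancel]
  rw [funext h]
  exact continuous_const.add (hf.continuous_primitive 0)

theorem MeasureTheory.Integrable.tendsto_integral_Iic_atTop (hf : Integrable f) :
    Tendsto (fun t => ∫ x in Iic t, f x) atTop (𝓝 (∫ x, f x)) :=
  (aecover_Iic tendsto_id).integral_tendsto_of_countably_generated hf

theorem MeasureTheory.Integrable.norm_setIntegral_le_integral_norm {α : Type*} [MeasurableSpace α]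
    {μ : Measure α} {g : α → E} (hg : Integrable g μ) (s : Set α) :
    ‖∫ x in s, g x ∂μ‖ ≤ ∫ x, ‖g x‖ ∂μ :=
  (norm_integral_le_integral_norm g).trans
    (setIntegral_le_integral hg.norm (.of_forall fun _ => norm_nonneg _))

end IntegralIic

theorem integral_mul_sqrt_one_sub_sq :
    ∫ s in (0:ℝ)..1, s * √(1 - s ^ 2) = 1 / 3 := by
  have hderiv : ∀ s ∈ uIcc (0:ℝ) 1,
      HasDerivAt (fun s : ℝ => -(1 / 3) * (1 - s ^ 2) ^ (3 / 2 : ℝ)) (s * √(1 - s ^ 2)) s := by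
    intro s _
    have h := (((hasDerivAt_pow 2 s).const_sub 1).rpow_const
      (p := 3 / 2) (Or.inr (by norm_num))).const_mul (-(1 / 3) : ℝ)
    refine h.congr_deriv ?_
    rw [show (3 / 2 : ℝ) - 1 = 1 / 2 by norm_num, ← Real.sqrt_eq_rpow]
    push_cast
    ring
  rw [intervalIntegral.integral_eq_sub_of_hasDerivAt hderiv
    ((by fun_prop : Continuous fun s : ℝ => s * √(1 - s ^ 2)).intervalIntegrable 0 1)]
  norm_num

theorem intervalIntegral_mul_sqrt_sq_sub_sq_eq (g : ℝ → ℝ) {ρ : ℝ} (hρ : 0 < ρ) :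
    ∫ t in (0:ℝ)..ρ, t * √(ρ ^ 2 - t ^ 2) * g t
      = ρ ^ 3 * ∫ s in (0:ℝ)..1, s * √(1 - s ^ 2) * g (ρ * s) := by
  have hscale : ∀ s : ℝ, ρ * s * √(ρ ^ 2 - (ρ * s) ^ 2) * g (ρ * s)
      = ρ ^ 2 * (s * √(1 - s ^ 2) * g (ρ * s)) := fun s => by
    rw [show ρ ^ 2 - (ρ * s) ^ 2 = ρ ^ 2 * (1 - s ^ 2) by ring,
      Real.sqrt_mul (sq_nonneg ρ), Real.sqrt_sq hρ.le]
    ring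
  have h := intervalIntegral.smul_integral_comp_mul_left
    (fun t => t * √(ρ ^ 2 - t ^ 2) * g t) ρ (a := 0) (b := 1)
  simp only [hscale, intervalIntegral.integral_const_mul, mul_zero, mul_one, smul_eq_mul] at h
  rw [← h]
  ring

theorem tendsto_intervalIntegral_mul_comp_mul_atTop {k g : ℝ → ℝ} {B L : ℝ}
    (hk : IntervalIntegrable k volume 0 1) (hg : Measurable g) (hgB : ∀ t, |g t| ≤ B)
    (hgL : Tendsto g atTop (𝓝 L)) :
    Tendsto (fun ρ => ∫ s in (0:ℝ)..1, k s * g (ρ * s)) atTop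
      (𝓝 ((∫ s in (0:ℝ)..1, k s) * L)) := by
  rw [← intervalIntegral.integral_mul_const]
  refine intervalIntegral.tendsto_integral_filter_of_dominated_convergence
    (fun s => |k s| * B) ?_ ?_ (hk.abs.mul_const B) ?_
  · exact .of_forall fun ρ => hk.def'.aestronglyMeasurable.mul
      (hg.comp (measurable_const_mul ρ)).aestronglyMeasurable
  · refine .of_forall fun ρ => .of_forall fun s _ => ?_
    rw [Real.norm_eq_abs, abs_mul]
    exact mul_le_mul_of_nonneg_left (hgB _) (abs_nonneg _)
  · refine .of_forall fun s hs => ?_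
    rw [uIoc_of_le zero_le_one] at hs
    have hρs : Tendsto (fun ρ => ρ * s) atTop atTop := tendsto_id.atTop_mul_const hs.1
    exact (hgL.comp hρs).const_mul (k s)

theorem h_rho_over_rho_cubed_general (φ : ℝ → ℝ) (hφ : Integrable φ)
    (hint : ∫ s, φ s = 1)
    (fT : ℝ → ℝ) (hfT : ∀ t, fT t = (∫ s in Set.Iic t, φ s) - 1/2)
    (h : ℝ → ℝ)
    (hh : ∀ ρ, h ρ = 4 * ∫ t in (0:ℝ)..ρ, t * Real.sqrt (ρ^2 - t^2) * fT t) :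
    Tendsto (fun ρ => h ρ / ρ^3) atTop (nhds (2/3)) := by
  have hfT_eq : fT = fun t => (∫ s in Iic t, φ s) - 1 / 2 := funext hfT
  have hfT_meas : Measurable fT := by
    rw [hfT_eq]; exact (hφ.continuous_integral_Iic.sub continuous_const).measurable
  have hfT_bdd : ∀ t, |fT t| ≤ (∫ s, ‖φ s‖) + 1 / 2 := fun t => by
    rw [hfT t]
    exact (abs_sub _ _).trans (by
      simpa using add_le_add_right (hφ.norm_setIntegral_le_integral_norm (Iic t)) (1 / 2))
  have hfT_lim : Tendsto fT atTop (𝓝 (1 / 2)) := by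
    rw [hfT_eq]
    convert hφ.tendsto_integral_Iic_atTop.sub_const (1 / 2) using 2
    rw [hint]; norm_num
  have hk : IntervalIntegrable (fun s : ℝ => s * √(1 - s ^ 2)) volume 0 1 :=
    (by fun_prop : Continuous fun s : ℝ => s * √(1 - s ^ 2)).intervalIntegrable 0 1
  have hlim := (tendsto_intervalIntegral_mul_comp_mul_atTop hk hfT_meas hfT_bdd
    hfT_lim).const_mul 4
  rw [integral_mul_sqrt_one_sub_sq] at hlim
  refine (hlim.congr' ?_).trans (by norm_num)
  filter_upwards [eventually_gt_atTop 0] with ρ hρ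
  rw [hh, intervalIntegral_mul_sqrt_sq_sub_sq_eq _ hρ, mul_left_comm, mul_div_cancel_left₀ _ (pow_ne_zero 3 hρ.ne')]

/-- With `f_T(t) = ∫_{-∞}^t φ(s) ds − 1/2`, `∫φ = 1`, `φ` integrable and compactly
supported, `h(ρ) = 4∫₀^ρ t √(ρ²−t²) f_T(t) dt` satisfies `h(ρ)/ρ³ → 2/3`. -/
theorem h_rho_over_rho_cubed (φ : ℝ → ℝ) (hφ : Integrable φ)
    (hsupp : HasCompactSupport φ) (hint : ∫ s, φ s = 1)
    (fT : ℝ → ℝ) (hfT : ∀ t, fT t = (∫ s in Set.Iic t, φ s) - 1/2)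
    (h : ℝ → ℝ)
    (hh : ∀ ρ, h ρ = 4 * ∫ t in (0:ℝ)..ρ, t * Real.sqrt (ρ^2 - t^2) * fT t) :
    Tendsto (fun ρ => h ρ / ρ^3) atTop (nhds (2/3)) :=
  h_rho_over_rho_cubed_general φ hφ hint fT hfT h hh
end

section
/- Let C : ℝ² → ℝ be continuous with |C(x)| ≤ c/(1+|x|) for some c > 0. Define Ĉ_{ij}(ρ) = ∫_{B_ρ(0)} ∫_{B_ρ(0)} x_i y_j C(x − y) dx dy for i,j ∈ {1,2}. Then |Ĉ_{ij}(ρ)| = O(ρ⁵) as ρ → ∞. -/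
/-!
Since `|x_i|, |y_j| ≤ ρ` on the ball, `|Ĉ_{ij}(ρ)|` is at most `ρ² c` times the integral of
`(1 + ‖x - y‖)⁻¹` over `B_ρ × B_ρ`. For fixed `x ∈ B_ρ` the translate `x - B_ρ` lies in `B_{2ρ}`,
and in polar coordinates `∫_{B_R} (1 + ‖z‖)⁻¹ dz = 2 V ∫₀^R r/(1 + r) dr ≤ 2 V R`, with `V` the
area of the unit disk. So the inner integral is `O(ρ³)`, and integrating over `x ∈ B_ρ` costs a
further factor `V ρ²`.
-/

open MeasureTheory Filter Metric Set Module

local notation "ℝ²" => EuclideanSpace ℝ (Fin 2)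

lemma setIntegral_closedBall_comp_sub_le {G : Type*} [NormedAddCommGroup G] [MeasurableSpace G]
    [BorelSpace G] (μ : Measure G) [μ.IsAddLeftInvariant] [μ.IsNegInvariant] {g : G → ℝ}
    (hg : 0 ≤ g) {r s : ℝ} (hint : IntegrableOn g (closedBall 0 (r + s)) μ) {x : G}
    (hx : x ∈ closedBall 0 r) :
    ∫ y in closedBall 0 s, g (x - y) ∂μ ≤ ∫ z in closedBall 0 (r + s), g z ∂μ := by
  have hpres := μ.measurePreserving_sub_left x
  have hemb := measurableEmbedding_subLeft x
  have hsub : closedBall 0 s ⊆ (x - ·) ⁻¹' closedBall 0 (r + s) := fun y hy => by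
    rw [mem_closedBall_zero_iff] at hx hy
    rw [mem_preimage, mem_closedBall_zero_iff]
    exact (norm_sub_le x y).trans (add_le_add hx hy)
  rw [← hpres.setIntegral_preimage_emb hemb g]
  exact setIntegral_mono_set ((hpres.integrableOn_comp_preimage hemb).2 hint)
    (.of_forall fun y => hg (x - y)) hsub.eventuallyLE

lemma setIntegral_closedBall_inv_one_add_norm_le {E : Type*} [NormedAddCommGroup E]
    [NormedSpace ℝ E] [FiniteDimensional ℝ E] [MeasurableSpace E] [BorelSpace E]
    (μ : Measure E) [μ.IsAddHaarMeasure] (hE : finrank ℝ E = 2) {R : ℝ} (hR : 0 ≤ R) :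
    ∫ z in closedBall (0 : E) R, (1 + ‖z‖)⁻¹ ∂μ ≤ 2 * μ.real (ball 0 1) * R := by
  have hradial : ∫ z in closedBall (0 : E) R, (1 + ‖z‖)⁻¹ ∂μ =
      ∫ z, (Iic R).indicator (fun r => (1 + r)⁻¹) ‖z‖ ∂μ := by
    rw [← integral_indicator measurableSet_closedBall]
    congr 1 with z
    simp only [indicator, mem_closedBall_zero_iff, mem_Iic]
  have hprofile : ∫ r in Ioi (0 : ℝ), r * (Iic R).indicator (fun r => (1 + r)⁻¹) r ≤ R := by
    simp_rw [← indicator_mul_right _ (fun r : ℝ => r)]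
    rw [setIntegral_indicator measurableSet_Iic, Ioi_inter_Iic]
    refine (Real.le_norm_self _).trans
      ((norm_setIntegral_le_of_norm_le_const (C := 1) measure_Ioc_lt_top
        fun r (hr : r ∈ Ioc 0 R) => ?_).trans_eq ?_)
    · have hr0 : 0 < r := hr.1
      rw [Real.norm_of_nonneg (by positivity), ← div_eq_mul_inv, div_le_one (by positivity)]
      linarith
    · simp [hR]
  have : Nontrivial E := nontrivial_of_finrank_eq_succ hE
  rw [hradial, integral_fun_norm_addHaar, hE]
  simp only [nsmul_eq_mul, smul_eq_mul, Nat.cast_ofNat, Nat.add_one_sub_one, pow_one]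
  rw [← mul_assoc]
  gcongr

lemma norm_setIntegral_coord_mul_coord_mul_le {C : ℝ² → ℝ} {c : ℝ} (hc : 0 ≤ c)
    (hdecay : ∀ x, |C x| ≤ c / (1 + ‖x‖)) {ρ : ℝ} (hρ : 0 ≤ ρ) {x : ℝ²}
    (hx : x ∈ closedBall 0 ρ) (i j : Fin 2) :
    ‖∫ y in closedBall 0 ρ, x i * y j * C (x - y)‖ ≤
      4 * c * volume.real (ball (0 : ℝ²) 1) * ρ ^ 3 := by
  have hpointwise : ∀ y ∈ closedBall (0 : ℝ²) ρ,
      ‖x i * y j * C (x - y)‖ ≤ ρ ^ 2 * c * (1 + ‖x - y‖)⁻¹ := by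
    intro y hy
    rw [mem_closedBall_zero_iff] at hx hy
    have hxi : |x i| ≤ ρ := (PiLp.norm_apply_le x i).trans hx
    have hyj : |y j| ≤ ρ := (PiLp.norm_apply_le y j).trans hy
    have hC : |C (x - y)| ≤ c * (1 + ‖x - y‖)⁻¹ := div_eq_mul_inv c _ ▸ hdecay (x - y)
    rw [Real.norm_eq_abs, abs_mul, abs_mul, pow_two, mul_assoc (ρ * ρ)]
    gcongr
  have hcont : Continuous fun z : ℝ² => (1 + ‖z‖)⁻¹ :=
    (continuous_const.add continuous_norm).inv₀ fun z => (by positivity : 0 < 1 + ‖z‖).ne'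
  have hint : IntegrableOn (fun y => ρ ^ 2 * c * (1 + ‖x - y‖)⁻¹) (closedBall 0 ρ) :=
    (continuous_const.mul (hcont.comp (continuous_sub_left x))).continuousOn.integrableOn_compact
      (isCompact_closedBall _ _)
  calc ‖∫ y in closedBall 0 ρ, x i * y j * C (x - y)‖
      ≤ ∫ y in closedBall 0 ρ, ‖x i * y j * C (x - y)‖ := norm_integral_le_integral_norm _
    _ ≤ ∫ y in closedBall 0 ρ, ρ ^ 2 * c * (1 + ‖x - y‖)⁻¹ :=
        integral_mono_of_nonneg (.of_forall fun _ => norm_nonneg _) hint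
          ((ae_restrict_iff' measurableSet_closedBall).2 (.of_forall hpointwise))
    _ = ρ ^ 2 * c * ∫ y in closedBall 0 ρ, (1 + ‖x - y‖)⁻¹ := integral_const_mul _ _
    _ ≤ ρ ^ 2 * c * ∫ z in closedBall (0 : ℝ²) (ρ + ρ), (1 + ‖z‖)⁻¹ := by
        gcongr
        exact setIntegral_closedBall_comp_sub_le volume (fun z => by positivity)
          (hcont.continuousOn.integrableOn_compact (isCompact_closedBall _ _)) hx
    _ ≤ ρ ^ 2 * c * (2 * volume.real (ball (0 : ℝ²) 1) * (ρ + ρ)) := by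
        gcongr
        exact setIntegral_closedBall_inv_one_add_norm_le volume finrank_euclideanSpace_fin
          (by positivity)
    _ = 4 * c * volume.real (ball (0 : ℝ²) 1) * ρ ^ 3 := by ring

theorem covariance_matrix_growth_general (C : EuclideanSpace ℝ (Fin 2) → ℝ)
    (c : ℝ) (hc : 0 < c)
    (hdecay : ∀ x, |C x| ≤ c / (1 + ‖x‖))
    (Chat : ℝ → Fin 2 → Fin 2 → ℝ)
    (hChat : ∀ ρ i j, Chat ρ i j =
      ∫ x in Metric.closedBall (0 : EuclideanSpace ℝ (Fin 2)) ρ,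
        ∫ y in Metric.closedBall (0 : EuclideanSpace ℝ (Fin 2)) ρ,
          x i * y j * C (x - y)) :
    ∃ c' > 0, ∀ᶠ ρ in atTop, ∀ i j, |Chat ρ i j| ≤ c' * ρ^5 := by
  set V := volume.real (ball (0 : ℝ²) 1)
  have hV : 0 < V := ENNReal.toReal_pos (measure_ball_pos _ _ one_pos).ne' measure_ball_lt_top.ne
  refine ⟨4 * c * V ^ 2, by positivity, ?_⟩
  filter_upwards [eventually_ge_atTop 0] with ρ hρ i j
  calc |Chat ρ i j|
      = ‖∫ x in closedBall (0 : ℝ²) ρ, ∫ y in closedBall 0 ρ, x i * y j * C (x - y)‖ := by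
        rw [hChat, Real.norm_eq_abs]
    _ ≤ 4 * c * V * ρ ^ 3 * volume.real (closedBall (0 : ℝ²) ρ) :=
        norm_setIntegral_le_of_norm_le_const measure_closedBall_lt_top fun x hx =>
          norm_setIntegral_coord_mul_coord_mul_le hc.le hdecay hρ hx i j
    _ = 4 * c * V ^ 2 * ρ ^ 5 := by
        rw [Measure.addHaar_real_closedBall volume 0 hρ, finrank_euclideanSpace_fin]
        ring

/-- If `C : ℝ² → ℝ` is continuous with `|C(x)| ≤ c/(1+|x|)`, then
`Ĉ_{ij}(ρ) = ∫_{B_ρ}∫_{B_ρ} x_i y_j C(x−y) dx dy` is `O(ρ⁵)` as `ρ → ∞`. -/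
theorem covariance_matrix_growth (C : EuclideanSpace ℝ (Fin 2) → ℝ)
    (hcont : Continuous C) (c : ℝ) (hc : 0 < c)
    (hdecay : ∀ x, |C x| ≤ c / (1 + ‖x‖))
    (Chat : ℝ → Fin 2 → Fin 2 → ℝ)
    (hChat : ∀ ρ i j, Chat ρ i j =
      ∫ x in Metric.closedBall (0 : EuclideanSpace ℝ (Fin 2)) ρ,
        ∫ y in Metric.closedBall (0 : EuclideanSpace ℝ (Fin 2)) ρ,
          x i * y j * C (x - y)) :
    ∃ c' > 0, ∀ᶠ ρ in atTop, ∀ i j, |Chat ρ i j| ≤ c' * ρ^5 :=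
  covariance_matrix_growth_general C c hc hdecay Chat hChat
end

section
/- Suppose h(ρ) ≥ c₁ρ³ for large ρ (c₁ > 0), and the 2×2 symmetric positive definite covariance matrices Ĉ(ρ) satisfy trace(Ĉ(ρ)) ≤ c₂ρ⁵ for large ρ. Set H(ρ) = h(ρ)·e₁ ∈ ℝ². Then the noncentrality parameter μ(ρ) = H(ρ)ᵀ Ĉ(ρ)^{−1} H(ρ) satisfies μ(ρ) ≥ cρ for some c > 0 and all large ρ; in particular μ(ρ) → ∞. -/
/-!
Since `H(ρ) = h(ρ) e₁`, the noncentrality is `μ(ρ) = h(ρ)² (Ĉ(ρ)⁻¹)₁₁`. For a positive definite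
matrix `A`, expanding `0 ≤ vᵀ A v` at `v = A⁻¹ eᵢ - eᵢ / Aᵢᵢ` gives `(A⁻¹)ᵢᵢ ≥ 1 / Aᵢᵢ`, and
`Aᵢᵢ ≤ trace A`. Hence `μ(ρ) ≥ h(ρ)² / trace Ĉ(ρ) ≥ c₁² ρ⁶ / (c₂ ρ⁵) = (c₁² / c₂) ρ`.
-/

open Matrix Filter

namespace Matrix

variable {n : Type*} [Fintype n]

theorem PosSemidef.apply_self_le_trace {R : Type*} [Ring R] [PartialOrder R] [StarRing R]
    [IsOrderedAddMonoid R] {A : Matrix n n R} (hA : A.PosSemidef) (i : n) :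
    A i i ≤ A.trace :=
  Finset.single_le_sum (f := fun j ↦ A j j) (fun _ _ ↦ hA.diag_nonneg) (Finset.mem_univ i)

variable [DecidableEq n]

theorem single_dotProduct_mulVec_single {R : Type*} [CommSemiring R] (M : Matrix n n R) (i : n)
    (a : R) : Pi.single i a ⬝ᵥ (M *ᵥ Pi.single i a) = a ^ 2 * M i i := by
  simp only [single_dotProduct, mulVec_single, col_apply, MulOpposite.smul_eq_mul_unop,
    MulOpposite.unop_op, Pi.smul_apply]
  ring

variable {K : Type*} [Field K] [LinearOrder K] [IsStrictOrderedRing K] [StarRing K] [TrivialStar K]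

theorem PosDef.inv_apply_self_le_nonsing_inv_apply_self {A : Matrix n n K} (hA : A.PosDef) (i : n) :
    (A i i)⁻¹ ≤ A⁻¹ i i := by
  set e : n → K := Pi.single i 1
  set t := (A i i)⁻¹
  have ht : t * A i i = 1 := inv_mul_cancel₀ hA.diag_pos.ne'
  have hAt : Aᵀ = A := by simpa using hA.isHermitian.eq
  have hAB : A * A⁻¹ = 1 := mul_nonsing_inv A ((isUnit_iff_isUnit_det A).mp hA.isUnit)
  have hcross : (A⁻¹ *ᵥ e) ⬝ᵥ (A *ᵥ e) = 1 := by
    rw [dotProduct_mulVec, ← mulVec_transpose, hAt, mulVec_mulVec, hAB, one_mulVec]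
    simp [e]
  have hquad := hA.posSemidef.dotProduct_mulVec_nonneg (A⁻¹ *ᵥ e - t • e)
  simp only [star_trivial, mulVec_sub, mulVec_smul, mulVec_mulVec, hAB, one_mulVec, sub_dotProduct,
    dotProduct_sub, smul_dotProduct, dotProduct_smul, hcross] at hquad
  simp only [mulVec_single, MulOpposite.op_one, one_smul, dotProduct_single, col_apply, mul_one,
    Pi.single_eq_same, smul_eq_mul, single_dotProduct, one_mul, e] at hquad
  rwa [ht, sub_self, mul_zero, sub_zero, sub_nonneg] at hquad

theorem PosDef.sq_div_trace_le_single_dotProduct_inv_mulVec_single {A : Matrix n n K}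
    (hA : A.PosDef) (i : n) (a : K) :
    a ^ 2 / A.trace ≤ Pi.single i a ⬝ᵥ (A⁻¹ *ᵥ Pi.single i a) := by
  rw [single_dotProduct_mulVec_single, div_eq_mul_inv]
  gcongr
  calc (A.trace)⁻¹ ≤ (A i i)⁻¹ := by
        gcongr
        · exact hA.diag_pos
        · exact hA.posSemidef.apply_self_le_trace i
    _ ≤ A⁻¹ i i := hA.inv_apply_self_le_nonsing_inv_apply_self i

end Matrix

/-- If the signal magnitude satisfies `h(ρ) ≥ c₁ρ³` for large `ρ`, and the
symmetric positive definite covariance matrices satisfy `trace(Ĉ(ρ)) ≤ c₂ρ⁵`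
for large `ρ`, then the noncentrality parameter
`μ(ρ) = H(ρ)ᵀ Ĉ(ρ)⁻¹ H(ρ)` with `H(ρ) = h(ρ)·e₁` satisfies `μ(ρ) ≥ cρ` for
some `c > 0` and all large `ρ`; in particular `μ(ρ) → ∞`. -/
theorem noncentrality_growth (h : ℝ → ℝ) (c₁ c₂ : ℝ) (hc₁ : 0 < c₁) (hc₂ : 0 < c₂)
    (Chat : ℝ → Matrix (Fin 2) (Fin 2) ℝ) (hpd : ∀ ρ, (Chat ρ).PosDef)
    (hh : ∀ᶠ ρ in atTop, c₁ * ρ^3 ≤ h ρ)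
    (htr : ∀ᶠ ρ in atTop, (Chat ρ).trace ≤ c₂ * ρ^5)
    (H : ℝ → Fin 2 → ℝ) (hH : ∀ ρ, H ρ = fun i => if i = 0 then h ρ else 0)
    (μ : ℝ → ℝ) (hμ : ∀ ρ, μ ρ = H ρ ⬝ᵥ ((Chat ρ)⁻¹ *ᵥ H ρ)) :
    (∃ c > 0, ∀ᶠ ρ in atTop, c * ρ ≤ μ ρ) ∧ Tendsto μ atTop atTop := by
  have hH' : ∀ ρ, H ρ = Pi.single 0 (h ρ) := fun ρ ↦ by
    ext i
    rw [hH, Pi.single_apply]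
  have hlin : ∀ᶠ ρ in atTop, c₁ ^ 2 / c₂ * ρ ≤ μ ρ := by
    filter_upwards [hh, htr, eventually_gt_atTop 0] with ρ hhρ htrρ hρ
    calc c₁ ^ 2 / c₂ * ρ = (c₁ * ρ ^ 3) ^ 2 / (c₂ * ρ ^ 5) := by field_simp
      _ ≤ h ρ ^ 2 / (Chat ρ).trace := by
          have := (hpd ρ).trace_pos
          gcongr
      _ ≤ μ ρ := by
          rw [hμ, hH']
          exact (hpd ρ).sq_div_trace_le_single_dotProduct_inv_mulVec_single 0 (h ρ)
  have hc : 0 < c₁ ^ 2 / c₂ := by positivity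
  exact ⟨⟨_, hc, hlin⟩, tendsto_atTop_mono' _ hlin (tendsto_id.const_mul_atTop hc)⟩
end
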